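/- Let (x^k)_{k ≥ −1} be a cDCA sequence, and assume h is differentiable with ∇h being L_h-Lipschitz continuous on the convex hull of {x^k : k ≥ −1}. Then for every k ≥ 0 there exists ξ^{k+1} ∈ ∂g(x^{k+1}) such that the pair v^{k+1} := (∇f(x^{k+1}) + ξ^{k+1} − ∇h(x^{k+1}) + 2τ(x^{k+1} − x^k), 2τ(x^k − x^{k+1})) ∈ ℝⁿ × ℝⁿ satisfies ‖v^{k+1}‖ ≤ ((1 − μλ)δ/μ)‖x^k − x^{k−1}‖ + (λ + L_h + 4τ)‖x^{k+1} − x^k‖, where the norm of a pair is bounded by the sum of the Euclidean norms of its two components. -/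

import Mathlib

open Set Filter Topology
open scoped InnerProductSpace

noncomputable section

abbrev Euc (n : ℕ) := EuclideanSpace ℝ (Fin n)

/-- The subdifferential of an extended-real-valued function `g` at `u`. -/
def SubdiffE {n : ℕ} (g : Euc n → EReal) (u : Euc n) : Set (Euc n) :=
  {ξ | ∀ z, g u + ((⟪ξ, z - u⟫_ℝ : ℝ) : EReal) ≤ g z}

/-- The subdifferential of a real-valued function `h` at `u`. -/
def SubdiffR {n : ℕ} (h : Euc n → ℝ) (u : Euc n) : Set (Euc n) :=
  {ξ | ∀ z, h u + ⟪ξ, z - u⟫_ℝ ≤ h z}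

/-- Convexity for extended-real-valued functions. -/
def ConvexEReal {n : ℕ} (g : Euc n → EReal) : Prop :=
  ∀ x y : Euc n, ∀ a b : ℝ, 0 ≤ a → 0 ≤ b → a + b = 1 →
    g (a • x + b • y) ≤ (a : EReal) * g x + (b : EReal) * g y

/-- `g` is proper: nowhere `⊥` and somewhere finite. -/
def ProperE {n : ℕ} (g : Euc n → EReal) : Prop :=
  (∀ x, g x ≠ ⊥) ∧ ∃ x, g x ≠ ⊤

/-- `P` is the proximal mapping of `g`: for every `α > 0` and every `x`, `P α x` is
the unique minimizer over `ℝⁿ` of `y ↦ g y + (1/(2α)) ‖x - y‖²`. -/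
def IsProx {n : ℕ} (g : Euc n → EReal) (P : ℝ → Euc n → Euc n) : Prop :=
  ∀ α : ℝ, 0 < α → ∀ x p, P α x = p ↔
    (∀ y, g p + ((1/(2*α) * ‖x - p‖^2 : ℝ) : EReal) ≤ g y + ((1/(2*α) * ‖x - y‖^2 : ℝ) : EReal))

/-- A cDCA sequence, indexed so that `x 0 = x⁻¹` and `x (k+1) = xᵏ` for `k ≥ 0`:
for every `k ≥ 0` there exist `ηᵏ ∈ ∂h(xᵏ)` and `yᵏ` with
`x^{k+1} = Prox_{μg}((1-μλ)yᵏ - μ∇f(yᵏ) + μλxᵏ + μηᵏ)` and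
`‖x^{k+1} - yᵏ‖ ≤ δ‖x^{k-1} - xᵏ‖`. -/
def IsCDCA {n : ℕ} (f' : Euc n → Euc n) (h : Euc n → ℝ) (P : ℝ → Euc n → Euc n)
    (lam mu δ : ℝ) (x : ℕ → Euc n) : Prop :=
  ∀ k : ℕ, ∃ η ∈ SubdiffR h (x (k+1)), ∃ y,
    x (k+2) = P mu ((1 - mu*lam) • y - mu • f' y + (mu*lam) • x (k+1) + mu • η) ∧
    ‖x (k+2) - y‖ ≤ δ * ‖x k - x (k+1)‖

/-!
The prox step yields `ξ := μ⁻¹ (w - x^{k+1}) ∈ ∂g(x^{k+1})`, where `w` is the prox argument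
(first-order optimality of the prox), and differentiability of `h` forces `ηᵏ = ∇h(xᵏ)`.
Since `μ⁻¹ = λ + L_f / 2`, the first component of `v^{k+1}` then splits as
`(∇f(x^{k+1}) - ∇f(yᵏ) - (L_f/2)(x^{k+1} - yᵏ)) + λ(xᵏ - x^{k+1}) + (∇h(xᵏ) - ∇h(x^{k+1}))
  + 2τ(x^{k+1} - xᵏ)`.
Cocoercivity of `∇f` (Baillon–Haddad) bounds the first term by `(L_f/2)‖x^{k+1} - yᵏ‖
≤ (L_f/2) δ ‖xᵏ - x^{k-1}‖`, and `(L_f/2) δ = (1 - μλ) δ / μ`; the remaining terms are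
controlled by `λ`, `L_h` and `2τ`.
-/

section Smooth

variable {E : Type*} [NormedAddCommGroup E] [InnerProductSpace ℝ E] [CompleteSpace E]

theorem HasGradientAt.hasDerivAt_add_smul {f : E → ℝ} {g a v : E} {t : ℝ}
    (hf : HasGradientAt f g (a + t • v)) :
    HasDerivAt (fun s : ℝ => f (a + s • v)) ⟪g, v⟫_ℝ t := by
  have hline : HasDerivAt (fun s : ℝ => a + s • v) v t := by
    simpa using ((hasDerivAt_id t).smul_const v).const_add a
  simpa [Function.comp_def] using hf.hasFDerivAt.comp_hasDerivAt t hline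

theorem ConvexOn.add_inner_gradient_le {f : E → ℝ} {g u : E} (hf : ConvexOn ℝ univ f)
    (hg : HasGradientAt f g u) (z : E) : f u + ⟪g, z - u⟫_ℝ ≤ f z := by
  have hline : ConvexOn ℝ univ (fun s : ℝ => f (u + s • (z - u))) := by
    simpa [Function.comp_def, AffineMap.lineMap_apply_module', add_comm] using
      hf.comp_affineMap (AffineMap.lineMap u z)
  have hd := (show HasGradientAt f g (u + (0 : ℝ) • (z - u)) by simpa using hg).hasDerivAt_add_smul
  have := hline.le_slope_of_hasDerivAt (mem_univ 0) (mem_univ 1) one_pos hd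
  simp only [slope_def_field, zero_smul, add_zero, one_smul, add_sub_cancel, sub_zero,
    div_one] at this
  linarith

variable {f : E → ℝ} {f' : E → E} {L : ℝ}

theorem le_add_inner_gradient_add_sq (hf : ∀ z, HasGradientAt f (f' z) z)
    (hlip : ∀ z w, ‖f' z - f' w‖ ≤ L * ‖z - w‖) (a b : E) :
    f b ≤ f a + ⟪f' a, b - a⟫_ℝ + L / 2 * ‖b - a‖ ^ 2 := by
  set v := b - a
  set ψ : ℝ → ℝ := fun t => f (a + t • v) - ⟪f' a, v⟫_ℝ * t - L / 2 * ‖v‖ ^ 2 * t ^ 2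
  have hψ : ∀ t, HasDerivAt ψ (⟪f' (a + t • v) - f' a, v⟫_ℝ - L * ‖v‖ ^ 2 * t) t := by
    intro t
    refine ((((hf (a + t • v)).hasDerivAt_add_smul).sub
      ((hasDerivAt_id t).const_mul ⟪f' a, v⟫_ℝ)).sub
      ((hasDerivAt_pow 2 t).const_mul (L / 2 * ‖v‖ ^ 2))).congr_deriv ?_
    rw [inner_sub_left]
    ring
  have hanti : AntitoneOn ψ (Icc 0 1) := by
    refine antitoneOn_of_hasDerivWithinAt_nonpos (convex_Icc 0 1)
      (fun t _ => (hψ t).continuousAt.continuousWithinAt)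
      (fun t _ => (hψ t).hasDerivWithinAt) fun t ht => ?_
    rw [interior_Icc] at ht
    have hbound := calc ⟪f' (a + t • v) - f' a, v⟫_ℝ ≤ ‖f' (a + t • v) - f' a‖ * ‖v‖ :=
          real_inner_le_norm _ _
      _ ≤ L * ‖t • v‖ * ‖v‖ := by
          gcongr
          simpa using hlip (a + t • v) a
      _ = L * ‖v‖ ^ 2 * t := by rw [norm_smul, Real.norm_of_nonneg ht.1.le]; ring
    linarith
  have := hanti (left_mem_Icc.2 zero_le_one) (right_mem_Icc.2 zero_le_one) zero_le_one
  simp only [ψ, v, zero_smul, add_zero, one_smul, mul_zero, mul_one, sub_zero, one_pow,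
    add_sub_cancel, ne_eq, OfNat.ofNat_ne_zero, not_false_eq_true, zero_pow] at this
  linarith

theorem sq_norm_gradient_sub_div_le (hL : 0 < L) (hconv : ConvexOn ℝ univ f)
    (hf : ∀ z, HasGradientAt f (f' z) z) (hlip : ∀ z w, ‖f' z - f' w‖ ≤ L * ‖z - w‖)
    (a b : E) : ‖f' a - f' b‖ ^ 2 / (2 * L) ≤ f a - f b - ⟪f' b, a - b⟫_ℝ := by
  set u := f' a - f' b
  -- compare `f` at `a` and `b` through the gradient step `a - L⁻¹ u`
  have hdesc := le_add_inner_gradient_add_sq hf hlip a (a - L⁻¹ • u)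
  have hsupp := hconv.add_inner_gradient_le (hf b) (a - L⁻¹ • u)
  have hu : ⟪f' a, u⟫_ℝ - ⟪f' b, u⟫_ℝ = ‖u‖ ^ 2 := by
    rw [← inner_sub_left, real_inner_self_eq_norm_sq]
  rw [sub_sub_cancel_left, inner_neg_right, real_inner_smul_right, norm_neg, norm_smul,
    Real.norm_of_nonneg (inv_nonneg.2 hL.le)] at hdesc
  rw [sub_right_comm, inner_sub_right, real_inner_smul_right] at hsupp
  have hu' : L⁻¹ * ⟪f' a, u⟫_ℝ - L⁻¹ * ⟪f' b, u⟫_ℝ = L⁻¹ * ‖u‖ ^ 2 := by rw [← mul_sub, hu]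
  have hquad : L⁻¹ * ‖u‖ ^ 2 - L / 2 * (L⁻¹ * ‖u‖) ^ 2 = ‖u‖ ^ 2 / (2 * L) := by
    field_simp
    ring
  linarith

theorem sq_norm_gradient_sub_le_mul_inner (hL : 0 < L) (hconv : ConvexOn ℝ univ f)
    (hf : ∀ z, HasGradientAt f (f' z) z) (hlip : ∀ z w, ‖f' z - f' w‖ ≤ L * ‖z - w‖)
    (a b : E) : ‖f' a - f' b‖ ^ 2 ≤ L * ⟪f' a - f' b, a - b⟫_ℝ := by
  have hab := sq_norm_gradient_sub_div_le hL hconv hf hlip a b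
  have hba := sq_norm_gradient_sub_div_le hL hconv hf hlip b a
  rw [norm_sub_rev] at hba
  have hsum : ‖f' a - f' b‖ ^ 2 / L ≤ ⟪f' a - f' b, a - b⟫_ℝ := by
    have hinner : ⟪f' a - f' b, a - b⟫_ℝ = -⟪f' b, a - b⟫_ℝ - ⟪f' a, b - a⟫_ℝ := by
      rw [inner_sub_left, ← neg_sub b a, inner_neg_right, inner_neg_right]
      ring
    have h2 : ‖f' a - f' b‖ ^ 2 / L = 2 * (‖f' a - f' b‖ ^ 2 / (2 * L)) := by field_simp
    linarith
  rwa [div_le_iff₀' hL] at hsum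

theorem norm_gradient_sub_sub_half_smul_le (hL : 0 < L) (hconv : ConvexOn ℝ univ f)
    (hf : ∀ z, HasGradientAt f (f' z) z) (hlip : ∀ z w, ‖f' z - f' w‖ ≤ L * ‖z - w‖)
    (a b : E) : ‖f' a - f' b - (L / 2) • (a - b)‖ ≤ L / 2 * ‖a - b‖ := by
  have hco := sq_norm_gradient_sub_le_mul_inner hL hconv hf hlip a b
  refine le_of_sq_le_sq ?_ (by positivity)
  rw [norm_sub_sq_real, real_inner_smul_right, norm_smul, Real.norm_of_nonneg (by positivity)]
  nlinarith

end Smooth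

theorem eq_of_mem_subdiffR {n : ℕ} {h : Euc n → ℝ} {g u η : Euc n} (hg : HasGradientAt h g u)
    (hη : η ∈ SubdiffR h u) : η = g := by
  have hmin : IsLocalMin (fun z => h z - ⟪η, z⟫_ℝ) u :=
    Eventually.of_forall fun z => by
      have := hη z
      rw [inner_sub_right] at this
      linarith
  have hzero := hmin.hasFDerivAt_eq_zero (hg.hasFDerivAt.sub (innerSL ℝ η).hasFDerivAt)
  refine ((InnerProductSpace.toDual ℝ (Euc n)).injective ?_).symm
  ext z
  simpa [sub_eq_zero] using congrArg (fun φ => φ z) hzero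

theorem add_inner_le_of_forall_le_segment {E : Type*} [NormedAddCommGroup E]
    [InnerProductSpace ℝ E] {gp gz α : ℝ} {w p z : E}
    (h : ∀ t ∈ Ioc (0 : ℝ) 1, gp + 1 / (2 * α) * ‖w - p‖ ^ 2 ≤
      (1 - t) * gp + t * gz + 1 / (2 * α) * ‖w - (p + t • (z - p))‖ ^ 2) :
    gp + ⟪α⁻¹ • (w - p), z - p⟫_ℝ ≤ gz := by
  set C := 1 / (2 * α) * ‖z - p‖ ^ 2
  have hlim : Tendsto (fun t : ℝ => gz + t * C) (𝓝[>] 0) (𝓝 gz) :=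
    tendsto_nhdsWithin_of_tendsto_nhds <| by
      have : Continuous fun t : ℝ => gz + t * C := by fun_prop
      simpa using this.tendsto 0
  refine ge_of_tendsto hlim ?_
  filter_upwards [Ioc_mem_nhdsGT one_pos] with t ht
  have hexp : ‖w - (p + t • (z - p))‖ ^ 2 =
      ‖w - p‖ ^ 2 - 2 * (t * ⟪w - p, z - p⟫_ℝ) + t ^ 2 * ‖z - p‖ ^ 2 := by
    rw [← sub_sub, norm_sub_sq_real, real_inner_smul_right, norm_smul, mul_pow,
      Real.norm_of_nonneg ht.1.le]
  have := h t ht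
  rw [hexp] at this
  rw [real_inner_smul_left]
  refine le_of_mul_le_mul_left ?_ ht.1
  linear_combination this

theorem inv_smul_sub_prox_mem_subdiffE {n : ℕ} {g : Euc n → EReal} {P : ℝ → Euc n → Euc n}
    (hbot : ∀ x, g x ≠ ⊥) (hconv : ConvexEReal g) (hP : IsProx g P) {α : ℝ} (hα : 0 < α)
    (w : Euc n) : α⁻¹ • (w - P α w) ∈ SubdiffE g (P α w) := by
  set p := P α w
  have hmin := (hP α hα w p).1 rfl
  intro z
  by_cases hz : g z = ⊤
  · simp [hz]
  obtain ⟨gz, hgz⟩ : ∃ r : ℝ, g z = r := ⟨_, (EReal.coe_toReal hz (hbot z)).symm⟩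
  have hp : g p ≠ ⊤ := fun hp => by
    have h := hmin z
    rw [hp, hgz, EReal.top_add_of_ne_bot (EReal.coe_ne_bot _), top_le_iff, ← EReal.coe_add] at h
    exact EReal.coe_ne_top _ h
  obtain ⟨gp, hgp⟩ : ∃ r : ℝ, g p = r := ⟨_, (EReal.coe_toReal hp (hbot p)).symm⟩
  rw [hgp, hgz, ← EReal.coe_add]
  refine EReal.coe_le_coe_iff.2 (add_inner_le_of_forall_le_segment fun t ht => ?_)
  have hseg := hconv p z (1 - t) t (by linarith [ht.2]) ht.1.le (by ring)
  rw [show (1 - t) • p + t • z = p + t • (z - p) by module, hgp, hgz] at hseg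
  have := (hmin (p + t • (z - p))).trans (add_le_add_left hseg _)
  rw [hgp] at this
  exact_mod_cast this

theorem cdca_residual_eq {E : Type*} [AddCommGroup E] [Module ℝ E] {lam L μ : ℝ}
    (hμ : μ ≠ 0) (hL : L / 2 = μ⁻¹ - lam) (x₁ x₂ y u v η w : E) :
    u + μ⁻¹ • ((1 - μ * lam) • y - μ • v + (μ * lam) • x₁ + μ • η - x₂) - w =
      (u - v - (L / 2) • (x₂ - y)) + lam • (x₁ - x₂) + (η - w) := by
  rw [hL]
  match_scalars <;> field_simp
  ring

theorem stmt11_general {n : ℕ}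
    (f : Euc n → ℝ) (f' : Euc n → Euc n) (Lf : ℝ) (hLf : 0 < Lf)
    (hfconv : ConvexOn ℝ Set.univ f)
    (hfgrad : ∀ z, HasGradientAt f (f' z) z)
    (hflip : ∀ z w, ‖f' z - f' w‖ ≤ Lf * ‖z - w‖)
    (g : Euc n → EReal) (hgproper : ProperE g) (hgconv : ConvexEReal g)
    (h : Euc n → ℝ)
    (P : ℝ → Euc n → Euc n) (hP : IsProx g P)
    (lam δ mu tau : ℝ) (hlam : 0 < lam)
    (hmu : mu = 2/(2*lam + Lf)) (htau : tau = Lf^2 * δ^2 / (8*lam))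
    (x : ℕ → Euc n) (hx : IsCDCA f' h P lam mu δ x)
    (h' : Euc n → Euc n) (hhgrad : ∀ z, HasGradientAt h (h' z) z)
    (Lh : ℝ) (hhlip : ∀ a ∈ convexHull ℝ (Set.range x), ∀ b ∈ convexHull ℝ (Set.range x),
      ‖h' a - h' b‖ ≤ Lh * ‖a - b‖) :
    ∀ k : ℕ, ∃ ξ ∈ SubdiffE g (x (k+2)),
      ‖f' (x (k+2)) + ξ - h' (x (k+2)) + (2*tau) • (x (k+2) - x (k+1))‖ +
        ‖(2*tau) • (x (k+1) - x (k+2))‖ ≤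
        ((1 - mu*lam) * δ / mu) * ‖x (k+1) - x k‖ +
          (lam + Lh + 4*tau) * ‖x (k+2) - x (k+1)‖ := by
  intro k
  obtain ⟨η, hη, y, hstep, hy⟩ := hx k
  have hμ : 0 < mu := by rw [hmu]; positivity
  have hL : Lf / 2 = mu⁻¹ - lam := by rw [hmu]; field_simp; ring
  have hτ : 0 ≤ tau := by rw [htau]; positivity
  have hξ := inv_smul_sub_prox_mem_subdiffE hgproper.1 hgconv hP hμ
    ((1 - mu * lam) • y - mu • f' y + (mu * lam) • x (k + 1) + mu • η)
  rw [← hstep] at hξ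
  refine ⟨_, hξ, ?_⟩
  have hcoef : (1 - mu * lam) * δ / mu = Lf / 2 * δ := by rw [hL]; field_simp
  rw [cdca_residual_eq hμ.ne' hL, eq_of_mem_subdiffR (hhgrad _) hη, hcoef]
  have hf := (norm_gradient_sub_sub_half_smul_le hLf hfconv hfgrad hflip (x (k+2)) y).trans
    (mul_le_mul_of_nonneg_left hy (by positivity))
  have hh := hhlip _ (subset_convexHull ℝ _ ⟨k+1, rfl⟩) _ (subset_convexHull ℝ _ ⟨k+2, rfl⟩)
  grw [norm_add₄_le]
  rw [norm_smul, norm_smul, norm_smul, Real.norm_of_nonneg hlam.le,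
    Real.norm_of_nonneg (by positivity), norm_sub_rev (x (k+1)) (x (k+2))]
  rw [norm_sub_rev (x (k+1)) (x (k+2))] at hh
  rw [norm_sub_rev (x k)] at hf
  linarith

/-- For a cDCA sequence, if `h` is differentiable with `∇h`
`L_h`-Lipschitz on the convex hull of `{xᵏ : k ≥ -1}`, then for every `k ≥ 0` there is
`ξ^{k+1} ∈ ∂g(x^{k+1})` such that the pair
`v^{k+1} = (∇f(x^{k+1}) + ξ^{k+1} - ∇h(x^{k+1}) + 2τ(x^{k+1} - xᵏ), 2τ(xᵏ - x^{k+1}))`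
satisfies `‖v^{k+1}‖ ≤ ((1-μλ)δ/μ)‖xᵏ - x^{k-1}‖ + (λ + L_h + 4τ)‖x^{k+1} - xᵏ‖`, the norm
of the pair being bounded by the sum of the Euclidean norms of its two components.
(Here `x 0 = x⁻¹` and `x (k+1) = xᵏ`.) -/
theorem stmt11 {n : ℕ}
    (f : Euc n → ℝ) (f' : Euc n → Euc n) (Lf : ℝ) (hLf : 0 < Lf)
    (hfconv : ConvexOn ℝ Set.univ f)
    (hfgrad : ∀ z, HasGradientAt f (f' z) z)
    (hflip : ∀ z w, ‖f' z - f' w‖ ≤ Lf * ‖z - w‖)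
    (g : Euc n → EReal) (hgproper : ProperE g) (hgconv : ConvexEReal g)
    (hglsc : LowerSemicontinuous g)
    (h : Euc n → ℝ) (hhconv : ConvexOn ℝ Set.univ h)
    (P : ℝ → Euc n → Euc n) (hP : IsProx g P)
    (lam δ mu tau : ℝ) (hlam : 0 < lam) (hδ : δ ∈ Set.Ioo 0 (2*lam/Lf))
    (hmu : mu = 2/(2*lam + Lf)) (htau : tau = Lf^2 * δ^2 / (8*lam))
    (x : ℕ → Euc n) (hx : IsCDCA f' h P lam mu δ x)
    (h' : Euc n → Euc n) (hhgrad : ∀ z, HasGradientAt h (h' z) z)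
    (Lh : ℝ) (hhlip : ∀ a ∈ convexHull ℝ (Set.range x), ∀ b ∈ convexHull ℝ (Set.range x),
      ‖h' a - h' b‖ ≤ Lh * ‖a - b‖) :
    ∀ k : ℕ, ∃ ξ ∈ SubdiffE g (x (k+2)),
      ‖f' (x (k+2)) + ξ - h' (x (k+2)) + (2*tau) • (x (k+2) - x (k+1))‖ +
        ‖(2*tau) • (x (k+1) - x (k+2))‖ ≤
        ((1 - mu*lam) * δ / mu) * ‖x (k+1) - x k‖ +
          (lam + Lh + 4*tau) * ‖x (k+2) - x (k+1)‖ :=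
  stmt11_general f f' Lf hLf hfconv hfgrad hflip g hgproper hgconv h P hP lam δ mu tau hlam hmu htau
    x hx h' hhgrad Lh hhlip
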